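/- For every z ∈ ℝ with z ≠ 0: ( ∫_0^∞ u^{−1/2} e^{−z²u/2} du ) / ( ∫_0^∞ u^{−1/2} (1+u)^{−1} e^{−z²u/2} du ) = e^{−z²/2} / ( √(2π) · |z| · (1 − Φ(|z|)) ), where Φ(v) = (2π)^{−1/2} ∫_{−∞}^{v} e^{−s²/2} ds is the standard normal cumulative distribution function. -/

import Mathlib

open MeasureTheory Set Real

/-! The numerator is a Gamma integral, `Γ(1/2) √2 / |z|`. In the denominator write
`(1 + u)⁻¹ = ∫₀^∞ e^{-(1+u)t} dt` and swap the integrals: the inner `u`-integral is again a Gamma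
integral, leaving `Γ(1/2) ∫₀^∞ e^{-t} (z²/2 + t)^{-1/2} dt`, and the substitution `t = (w² - z²)/2`
turns this into `Γ(1/2) √2 e^{z²/2} ∫_{|z|}^∞ e^{-w²/2} dw = 2 √π Γ(1/2) e^{z²/2} (1 - Φ(|z|))`.
The factors `Γ(1/2)` cancel in the ratio. -/

/-- The standard normal cumulative distribution function. -/
noncomputable def stdNormalCDF (y : ℝ) : ℝ :=
  (Real.sqrt (2 * Real.pi))⁻¹ * ∫ s in Set.Iic y, Real.exp (-s ^ 2 / 2)

lemma integral_exp_neg_mul_Ioi_zero {r : ℝ} (hr : 0 < r) :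
    ∫ t in Ioi (0:ℝ), exp (-(r * t)) = r⁻¹ := by
  have h := integral_exp_mul_Ioi (neg_lt_zero.2 hr) 0
  simp only [neg_mul, mul_zero, exp_zero, div_neg] at h
  rw [h, neg_div, neg_neg, one_div]

lemma rpow_neg_one_half_sq_div_two {w : ℝ} (hw : 0 ≤ w) : (w ^ 2 / 2) ^ (-(1/2:ℝ)) = √2 / w := by
  rw [rpow_neg (by positivity), ← sqrt_eq_rpow, sqrt_div (sq_nonneg w), sqrt_sq hw, inv_div]

lemma integrable_rpow_mul_exp_neg_mul_mul_exp_neg_one_add_mul {s b : ℝ} (hs : 0 < s)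
    (hb : 0 < b) :
    Integrable (fun p : ℝ × ℝ => p.1 ^ (s - 1) * exp (-(b * p.1)) * exp (-((1 + p.1) * p.2)))
      ((volume.restrict (Ioi 0)).prod (volume.restrict (Ioi 0))) := by
  have hu : IntegrableOn (fun u : ℝ => u ^ (s - 1) * exp (-(b * u))) (Ioi 0) := by
    simpa only [rpow_one, neg_mul] using
      integrableOn_rpow_mul_exp_neg_mul_rpow (by linarith : -1 < s - 1) one_pos hb
  have ht : IntegrableOn (fun t : ℝ => exp (-t)) (Ioi 0) := by
    simpa only [neg_mul, one_mul] using exp_neg_integrableOn_Ioi 0 one_pos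
  refine (hu.mul_prod ht).mono' (by fun_prop) ?_
  rw [Measure.prod_restrict]
  filter_upwards [ae_restrict_mem (measurableSet_Ioi.prod measurableSet_Ioi)]
    with ⟨u, t⟩ ⟨hu0, ht0⟩
  simp only [mem_Ioi] at hu0 ht0
  rw [norm_of_nonneg (by positivity)]
  gcongr
  nlinarith

theorem integral_rpow_mul_inv_one_add_mul_exp_neg_mul {s b : ℝ} (hs : 0 < s) (hb : 0 < b) :
    ∫ u in Ioi (0:ℝ), u ^ (s - 1) * (1 + u)⁻¹ * exp (-(b * u)) =
      Gamma s * ∫ t in Ioi (0:ℝ), exp (-t) * (b + t) ^ (-s) := by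
  calc ∫ u in Ioi (0:ℝ), u ^ (s - 1) * (1 + u)⁻¹ * exp (-(b * u))
      = ∫ u in Ioi (0:ℝ), ∫ t in Ioi (0:ℝ),
          u ^ (s - 1) * exp (-(b * u)) * exp (-((1 + u) * t)) := by
        refine setIntegral_congr_fun measurableSet_Ioi fun u hu => ?_
        rw [integral_const_mul, integral_exp_neg_mul_Ioi_zero (by linarith [mem_Ioi.1 hu])]
        ring
    _ = ∫ t in Ioi (0:ℝ), ∫ u in Ioi (0:ℝ),
          u ^ (s - 1) * exp (-(b * u)) * exp (-((1 + u) * t)) :=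
        integral_integral_swap (integrable_rpow_mul_exp_neg_mul_mul_exp_neg_one_add_mul hs hb)
    _ = ∫ t in Ioi (0:ℝ), Gamma s * (exp (-t) * (b + t) ^ (-s)) := by
        refine setIntegral_congr_fun measurableSet_Ioi fun t ht => ?_
        have hbt : 0 < b + t := by linarith [mem_Ioi.1 ht]
        have hsplit : ∀ u : ℝ, u ^ (s - 1) * exp (-(b * u)) * exp (-((1 + u) * t)) =
            exp (-t) * (u ^ (s - 1) * exp (-((b + t) * u))) := fun u => by
          rw [mul_assoc, ← exp_add, mul_left_comm, ← exp_add]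
          ring_nf
        simp_rw [hsplit]
        rw [integral_const_mul, integral_rpow_mul_exp_neg_mul_Ioi hs hbt, one_div,
          inv_rpow hbt.le, ← rpow_neg hbt.le]
        ring
    _ = Gamma s * ∫ t in Ioi (0:ℝ), exp (-t) * (b + t) ^ (-s) := integral_const_mul _ _

theorem integral_Ioi_zero_eq_integral_Ioi_mul_comp_sq_div_two_sub {c : ℝ} (hc : 0 ≤ c)
    (f : ℝ → ℝ) :
    ∫ t in Ioi (0:ℝ), f t = ∫ w in Ioi c, w * f (w ^ 2 / 2 - c ^ 2 / 2) := by
  set φ : ℝ → ℝ := fun w => w ^ 2 / 2 - c ^ 2 / 2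
  have hderiv : ∀ w ∈ Ioi c, HasDerivWithinAt φ w (Ioi c) w := fun w _ =>
    HasDerivAt.hasDerivWithinAt <| by
      convert ((hasDerivAt_pow 2 w).div_const 2).sub_const (c ^ 2 / 2) using 1
      ring
  have hinj : InjOn φ (Ioi c) := fun x hx y hy hxy => by
    have hx0 : 0 ≤ x := hc.trans hx.le
    have hy0 : 0 ≤ y := hc.trans hy.le
    exact (pow_left_inj₀ hx0 hy0 two_ne_zero).1 (by simpa [φ] using hxy)
  have himage : φ '' Ioi c = Ioi 0 := by
    ext t
    simp only [mem_image, mem_Ioi, φ]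
    constructor
    · rintro ⟨w, hw, rfl⟩
      nlinarith
    · intro ht
      refine ⟨√(2 * t + c ^ 2), ?_, ?_⟩
      · exact (lt_sqrt hc).2 (by linarith)
      · rw [sq_sqrt (by positivity)]
        ring
  rw [← himage, integral_image_eq_integral_abs_deriv_smul measurableSet_Ioi hderiv hinj]
  refine setIntegral_congr_fun measurableSet_Ioi fun w hw => ?_
  rw [smul_eq_mul, abs_of_pos (hc.trans_lt hw)]

theorem integral_exp_neg_mul_rpow_neg_one_half_add {c : ℝ} (hc : 0 ≤ c) :
    ∫ t in Ioi (0:ℝ), exp (-t) * (c ^ 2 / 2 + t) ^ (-(1/2:ℝ)) =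
      √2 * exp (c ^ 2 / 2) * ∫ w in Ioi c, exp (-w ^ 2 / 2) := by
  rw [integral_Ioi_zero_eq_integral_Ioi_mul_comp_sq_div_two_sub hc, ← integral_const_mul]
  refine setIntegral_congr_fun measurableSet_Ioi fun w hw => ?_
  have hw0 : 0 < w := hc.trans_lt hw
  rw [show c ^ 2 / 2 + (w ^ 2 / 2 - c ^ 2 / 2) = w ^ 2 / 2 by ring,
    rpow_neg_one_half_sq_div_two hw0.le,
    show -(w ^ 2 / 2 - c ^ 2 / 2) = c ^ 2 / 2 + -w ^ 2 / 2 by ring, exp_add]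
  field_simp

lemma integrable_exp_neg_sq_div_two : Integrable fun x : ℝ => exp (-x ^ 2 / 2) := by
  simpa only [show ∀ x : ℝ, -x ^ 2 / 2 = -(1/2) * x ^ 2 from fun x => by ring] using
    integrable_exp_neg_mul_sq one_half_pos

lemma integral_exp_neg_sq_div_two : ∫ x : ℝ, exp (-x ^ 2 / 2) = √(2 * π) := by
  simp_rw [show ∀ x : ℝ, -x ^ 2 / 2 = -(1/2) * x ^ 2 from fun x => by ring, integral_gaussian,
    div_div_eq_mul_div, div_one, mul_comm π]

lemma one_sub_stdNormalCDF (y : ℝ) :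
    1 - stdNormalCDF y = (√(2 * π))⁻¹ * ∫ s in Ioi y, exp (-s ^ 2 / 2) := by
  have hsplit := intervalIntegral.integral_Iic_add_Ioi (b := y)
    integrable_exp_neg_sq_div_two.integrableOn integrable_exp_neg_sq_div_two.integrableOn
  rw [integral_exp_neg_sq_div_two] at hsplit
  have h2π : √(2 * π) ≠ 0 := by positivity
  rw [stdNormalCDF, eq_sub_of_add_eq hsplit]
  field_simp
  ring

lemma integral_Ioi_exp_neg_sq_div_two_pos (y : ℝ) : 0 < ∫ s in Ioi y, exp (-s ^ 2 / 2) := by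
  refine (setIntegral_pos_iff_support_of_nonneg_ae (ae_of_all _ fun x => (exp_pos _).le)
    integrable_exp_neg_sq_div_two.integrableOn).2 ?_
  simp [Function.support, exp_ne_zero]

/-- the closed form of the function `g` appearing in the conditional
pinning rate under the arcsine prior `B(1/2,1/2)`:
`g(z) = e^{−z²/2}/(√(2π)|z|(1−Φ(|z|)))`. -/
theorem arcsine_prior_g_closed_form (z : ℝ) (hz : z ≠ 0) :
    (∫ u in Set.Ioi (0:ℝ), u ^ (-(1:ℝ)/2) * Real.exp (-(z ^ 2 * u) / 2)) /
      (∫ u in Set.Ioi (0:ℝ), u ^ (-(1:ℝ)/2) * (1 + u)⁻¹ * Real.exp (-(z ^ 2 * u) / 2)) =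
      Real.exp (-z ^ 2 / 2) /
        (Real.sqrt (2 * Real.pi) * |z| * (1 - stdNormalCDF |z|)) := by
  have hc : 0 < |z| := abs_pos.2 hz
  have hb : 0 < |z| ^ 2 / 2 := by positivity
  have hexponent : ∀ u : ℝ, -(z ^ 2 * u) / 2 = -(|z| ^ 2 / 2 * u) := fun u => by
    rw [sq_abs]; ring
  have hpow : -(1:ℝ)/2 = 1/2 - 1 := by norm_num
  have hnum : ∫ u in Ioi (0:ℝ), u ^ (-(1:ℝ)/2) * exp (-(z ^ 2 * u) / 2) =
      √2 / |z| * Gamma (1/2) := by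
    simp_rw [hexponent, hpow]
    rw [integral_rpow_mul_exp_neg_mul_Ioi one_half_pos hb, one_div (|z| ^ 2 / 2),
      inv_rpow hb.le, ← rpow_neg hb.le, rpow_neg_one_half_sq_div_two hc.le]
  have hden : ∫ u in Ioi (0:ℝ), u ^ (-(1:ℝ)/2) * (1 + u)⁻¹ * exp (-(z ^ 2 * u) / 2) =
      Gamma (1/2) * (√2 * exp (|z| ^ 2 / 2) * ∫ w in Ioi |z|, exp (-w ^ 2 / 2)) := by
    simp_rw [hexponent, hpow]
    rw [integral_rpow_mul_inv_one_add_mul_exp_neg_mul one_half_pos hb,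
      integral_exp_neg_mul_rpow_neg_one_half_add hc.le]
  have hΓ : Gamma (1/2) ≠ 0 := (Gamma_pos_of_pos one_half_pos).ne'
  have hT := (integral_Ioi_exp_neg_sq_div_two_pos |z|).ne'
  rw [hnum, hden, one_sub_stdNormalCDF, ← sq_abs z, show -|z| ^ 2 / 2 = -(|z| ^ 2 / 2) by ring,
    exp_neg]
  field_simp
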